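/- arXiv:2509.26385 — 2 statements merged into one kernel-verified Lean document; each statement's English description precedes it below -/
import Mathlib

section
/- For λ ∈ ℝ, χ > 0, ψ > 0, the function x ↦ x^{λ−1} exp(−(χ x^{−1} + ψ x)/2) on (0,∞) is integrable, and its integral equals 2 K_λ(√(χψ)) (χ/ψ)^{λ/2}, where K_λ is the modified Bessel function of the second kind. -/
open Real MeasureTheory

/-- The modified Bessel function of the second kind,
`K_λ(z) = ∫₀^∞ exp(-z cosh t) cosh(λ t) dt`. -/
noncomputable def besselK (l z : ℝ) : ℝ :=
  ∫ t in Set.Ioi (0 : ℝ), Real.exp (-z * Real.cosh t) * Real.cosh (l * t)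

/-- The basic integrability lemma: `exp (a t - z cosh t)` is integrable on `(0, ∞)`. -/
lemma gig_aux_integrableOn_Ioi (a z : ℝ) (hz : 0 < z) :
    IntegrableOn (fun t : ℝ => Real.exp (a * t - z * Real.cosh t)) (Set.Ioi 0) := by
  apply integrable_of_isBigO_exp_neg (a := 0) (b := 1) one_pos
  · exact (Real.continuous_exp.comp (by continuity)).continuousOn
  · rw [Asymptotics.isBigO_iff]
    refine ⟨1, ?_⟩
    filter_upwards [Filter.eventually_gt_atTop (0 : ℝ),
      (Real.tendsto_exp_div_pow_atTop 1).eventually_ge_atTop (2 * (|a| + 1) / z)] with t ht hexp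
    rw [pow_one] at hexp
    have h1 : (2 * (|a| + 1) / z) * t ≤ Real.exp t := by
      calc (2 * (|a| + 1) / z) * t ≤ (Real.exp t / t) * t :=
            mul_le_mul_of_nonneg_right hexp ht.le
        _ = Real.exp t := div_mul_cancel₀ _ ht.ne'
    have h2 : Real.exp t / 2 ≤ Real.cosh t := by
      rw [Real.cosh_eq]
      have := (Real.exp_pos (-t)).le
      linarith
    have hat : a * t ≤ |a| * t := mul_le_mul_of_nonneg_right (le_abs_self a) ht.le
    have h5 : 2 * (|a| + 1) * t ≤ z * Real.exp t := by
      have h6 := mul_le_mul_of_nonneg_left h1 hz.le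
      calc 2 * (|a| + 1) * t = z * (2 * (|a| + 1) / z * t) := by
            field_simp
        _ ≤ z * Real.exp t := h6
    have h7 : z * (Real.exp t / 2) ≤ z * Real.cosh t := mul_le_mul_of_nonneg_left h2 hz.le
    have key : a * t - z * Real.cosh t ≤ -t := by nlinarith
    have : Real.exp (a * t - z * Real.cosh t) ≤ Real.exp (-t) := Real.exp_le_exp.2 key
    simp only [Real.norm_eq_abs, Real.abs_exp, one_mul, neg_mul, one_mul]
    simpa using this

/-- Integrability over all of `ℝ`. -/
lemma gig_aux_integrable (a z : ℝ) (hz : 0 < z) :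
    Integrable (fun t : ℝ => Real.exp (a * t - z * Real.cosh t)) := by
  rw [← integrableOn_univ, ← Set.Iic_union_Ioi (a := (0 : ℝ)), integrableOn_union]
  refine ⟨?_, gig_aux_integrableOn_Ioi a z hz⟩
  have h_map_neg : ((volume : Measure ℝ).restrict (Set.Ici 0)).map Neg.neg
      = (volume : Measure ℝ).restrict (Set.Iic 0) := by
    conv => rhs; rw [← Measure.map_neg_eq_self (volume : Measure ℝ),
      measurableEmbedding_neg.restrict_map]
    simp
  rw [IntegrableOn, ← h_map_neg, measurableEmbedding_neg.integrable_map_iff]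
  have : ((fun t : ℝ => Real.exp (a * t - z * Real.cosh t)) ∘ Neg.neg)
      = fun t : ℝ => Real.exp ((-a) * t - z * Real.cosh t) := by
    funext t
    simp [Function.comp, Real.cosh_neg]
  rw [this]
  exact Iff.mpr integrableOn_Ici_iff_integrableOn_Ioi (gig_aux_integrableOn_Ioi (-a) z hz)

/-- Splitting the real-line integral into the Bessel form. -/
lemma gig_aux_integral_eq (a z : ℝ) (hz : 0 < z) :
    (∫ t : ℝ, Real.exp (a * t - z * Real.cosh t)) = 2 * besselK a z := by
  have hIoi := gig_aux_integrableOn_Ioi a z hz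
  have hIoi' := gig_aux_integrableOn_Ioi (-a) z hz
  have hIic : IntegrableOn (fun t : ℝ => Real.exp (a * t - z * Real.cosh t)) (Set.Iic 0) :=
    ((gig_aux_integrable a z hz).integrableOn)
  rw [← intervalIntegral.integral_Iic_add_Ioi hIic hIoi]
  have hneg : (∫ t in Set.Iic (0 : ℝ), Real.exp (a * t - z * Real.cosh t))
      = ∫ t in Set.Ioi (0 : ℝ), Real.exp ((-a) * t - z * Real.cosh t) := by
    have := integral_comp_neg_Iic (0 : ℝ)
      (fun x => Real.exp ((-a) * x - z * Real.cosh x))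
    rw [neg_zero] at this
    rw [← this]
    congr 1
    funext t
    rw [Real.cosh_neg]
    ring_nf
  rw [hneg, ← integral_add hIoi' hIoi]
  rw [besselK, ← integral_const_mul]
  congr 1
  funext t
  rw [Real.cosh_eq (a * t)]
  rw [show (-z) * Real.cosh t = -(z * Real.cosh t) from by ring]
  rw [sub_eq_add_neg, sub_eq_add_neg, Real.exp_add, Real.exp_add]
  rw [show (-a) * t = -(a * t) from by ring]
  ring

/-- For `λ ∈ ℝ`, `χ > 0`, `ψ > 0`, the GIG kernel
`x ↦ x^(λ-1) exp(-(χ/x + ψ x)/2)` is integrable on `(0, ∞)` and its integral equals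
`2 K_λ(√(χ ψ)) (χ/ψ)^(λ/2)`. -/
theorem gig_normalizing_constant (l χ ψ : ℝ) (hχ : 0 < χ) (hψ : 0 < ψ) :
    IntegrableOn
      (fun x : ℝ => x ^ (l - 1) * Real.exp (-(χ * x⁻¹ + ψ * x) / 2))
      (Set.Ioi 0) ∧
    (∫ x in Set.Ioi (0 : ℝ), x ^ (l - 1) * Real.exp (-(χ * x⁻¹ + ψ * x) / 2)) =
      2 * besselK l (Real.sqrt (χ * ψ)) * (χ / ψ) ^ (l / 2) := by
  set c : ℝ := Real.sqrt (χ / ψ) with hc_def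
  set z : ℝ := Real.sqrt (χ * ψ) with hz_def
  have hχψ : 0 < χ / ψ := div_pos hχ hψ
  have hc : 0 < c := Real.sqrt_pos.2 hχψ
  have hz : 0 < z := Real.sqrt_pos.2 (mul_pos hχ hψ)
  have hcz : c * z = χ := by
    rw [hc_def, hz_def, ← Real.sqrt_mul hχψ.le,
      show χ / ψ * (χ * ψ) = χ * χ by field_simp,
      Real.sqrt_mul_self hχ.le]
  have hcψ : c * ψ = z := by
    have h1 : c * ψ = Real.sqrt (χ / ψ) * Real.sqrt (ψ * ψ) := by
      rw [Real.sqrt_mul_self hψ.le]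
    rw [h1, ← Real.sqrt_mul hχψ.le, show χ / ψ * (ψ * ψ) = χ * ψ by field_simp]
  have hderiv : ∀ t ∈ (Set.univ : Set ℝ),
      HasDerivWithinAt (fun t : ℝ => c * Real.exp t) (c * Real.exp t) Set.univ t :=
    fun t _ => ((Real.hasDerivAt_exp t).const_mul c).hasDerivWithinAt
  have hinj : Set.InjOn (fun t : ℝ => c * Real.exp t) Set.univ := by
    intro s _ t _ h
    exact Real.exp_injective (mul_left_cancel₀ hc.ne' h)
  have himg : (fun t : ℝ => c * Real.exp t) '' Set.univ = Set.Ioi 0 := by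
    rw [Set.image_univ]
    ext x
    simp only [Set.mem_range, Set.mem_Ioi]
    constructor
    · rintro ⟨t, rfl⟩; positivity
    · intro hx
      refine ⟨Real.log (x / c), ?_⟩
      rw [Real.exp_log (div_pos hx hc)]
      field_simp
  have hpt : ∀ t : ℝ, |c * Real.exp t| •
      (fun x : ℝ => x ^ (l - 1) * Real.exp (-(χ * x⁻¹ + ψ * x) / 2)) (c * Real.exp t)
      = (χ / ψ) ^ (l / 2) * Real.exp (l * t - z * Real.cosh t) := by
    intro t
    have hx : 0 < c * Real.exp t := by positivity
    simp only [smul_eq_mul, abs_of_pos hx]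
    have e1 : χ * (c * Real.exp t)⁻¹ + ψ * (c * Real.exp t) = 2 * (z * Real.cosh t) := by
      rw [Real.cosh_eq, mul_inv]
      have hinv : (Real.exp t)⁻¹ = Real.exp (-t) := (Real.exp_neg t).symm
      have hχc : χ * c⁻¹ = z := by
        rw [← hcz]; field_simp
      calc χ * (c⁻¹ * (Real.exp t)⁻¹) + ψ * (c * Real.exp t)
          = (χ * c⁻¹) * (Real.exp t)⁻¹ + (c * ψ) * Real.exp t := by ring
        _ = z * Real.exp (-t) + z * Real.exp t := by rw [hχc, hcψ, hinv]
        _ = 2 * (z * ((Real.exp t + Real.exp (-t)) / 2)) := by ring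
    have e2 : (c * Real.exp t) ^ (l - 1) * (c * Real.exp t)
        = (χ / ψ) ^ (l / 2) * Real.exp (l * t) := by
      rw [← Real.rpow_add_one hx.ne' (l - 1), sub_add_cancel,
        Real.mul_rpow hc.le (Real.exp_pos t).le]
      congr 1
      · rw [hc_def, Real.sqrt_eq_rpow, ← Real.rpow_mul hχψ.le]
        congr 1
        ring
      · rw [← Real.exp_mul, mul_comm]
    rw [e1, show -(2 * (z * Real.cosh t)) / 2 = -(z * Real.cosh t) by ring,
      show l * t - z * Real.cosh t = l * t + -(z * Real.cosh t) by ring, Real.exp_add]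
    linear_combination Real.exp (-(z * Real.cosh t)) * e2
  have hiff := integrableOn_image_iff_integrableOn_abs_deriv_smul MeasurableSet.univ hderiv hinj
    (fun x : ℝ => x ^ (l - 1) * Real.exp (-(χ * x⁻¹ + ψ * x) / 2))
  rw [himg] at hiff
  have hInt : IntegrableOn (fun t : ℝ => |c * Real.exp t| •
      (fun x : ℝ => x ^ (l - 1) * Real.exp (-(χ * x⁻¹ + ψ * x) / 2)) (c * Real.exp t))
      Set.univ := by
    rw [show (fun t : ℝ => |c * Real.exp t| •
        (fun x : ℝ => x ^ (l - 1) * Real.exp (-(χ * x⁻¹ + ψ * x) / 2)) (c * Real.exp t))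
        = fun t : ℝ => (χ / ψ) ^ (l / 2) * Real.exp (l * t - z * Real.cosh t) from funext hpt,
      integrableOn_univ]
    exact (gig_aux_integrable l z hz).const_mul _
  refine ⟨hiff.mpr hInt, ?_⟩
  have hval := integral_image_eq_integral_abs_deriv_smul MeasurableSet.univ hderiv hinj
    (fun x : ℝ => x ^ (l - 1) * Real.exp (-(χ * x⁻¹ + ψ * x) / 2))
  rw [himg] at hval
  rw [hval, setIntegral_univ]
  simp_rw [hpt]
  rw [integral_const_mul, gig_aux_integral_eq l z hz]
  ring
end

section
/- If a density on ℝ^{p−1} × (0,∞) is proportional to exp{−½(2 sᵀ β + s₀ βᵀ Ω⁻¹ β)} · γ^{n/2} exp(−(s₀/2) γ) · exp(−½ βᵀ Λ⁻¹ β), where Ω is positive definite, s₀ > 0, and Λ is diagonal positive definite, then it factorizes as the product of a Gaussian density in β with covariance C = (s₀ Ω⁻¹ + Λ⁻¹)⁻¹ and mean −C s, and a Gamma(n/2 + 1, rate s₀/2) density in γ; in particular β and γ are independent under this density. -/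
open Matrix Real MeasureTheory ProbabilityTheory

lemma smul_posDef' {m : ℕ} {M : Matrix (Fin m) (Fin m) ℝ} (hM : M.PosDef) {c : ℝ} (hc : 0 < c) :
    (c • M).PosDef := by
  constructor
  · unfold Matrix.IsHermitian
    rw [conjTranspose_smul, hM.1]
    simp
  · intro x hx
    exact (hM.smul hc).2 hx

/-- A density on `ℝ^(p-1) × (0, ∞)` proportional to
`exp(-½(2 sᵀβ + s₀ βᵀ Ω⁻¹ β)) γ^(n/2) exp(-(s₀/2)γ) exp(-½ βᵀ Λ⁻¹ β)` factorizes as the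
product of the `N(-C s, C)` density in `β`, where `C = (s₀ Ω⁻¹ + Λ⁻¹)⁻¹`, and the
`Gamma(n/2 + 1, rate s₀/2)` density in `γ`; in particular `β` and `γ` are independent. -/
theorem wang_full_conditional_factorization {m : ℕ} (n : ℕ)
    (Ω : Matrix (Fin m) (Fin m) ℝ) (hΩ : Ω.PosDef)
    (s : Fin m → ℝ) (s₀ : ℝ) (hs₀ : 0 < s₀)
    (l : Fin m → ℝ) (hl : ∀ j, 0 < l j) :
    ∃ k : ℝ, 0 < k ∧
      ∀ (β : Fin m → ℝ), ∀ γ ∈ Set.Ioi (0 : ℝ),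
        Real.exp (-(2 * (s ⬝ᵥ β) + s₀ * (β ⬝ᵥ (Ω⁻¹ *ᵥ β))) / 2) *
            (γ ^ ((n : ℝ) / 2) * Real.exp (-(s₀ / 2) * γ)) *
            Real.exp (-(β ⬝ᵥ ((Matrix.diagonal l)⁻¹ *ᵥ β)) / 2) =
          k * ((2 * π) ^ (-(m : ℝ) / 2) *
              Real.sqrt (s₀ • Ω⁻¹ + (Matrix.diagonal l)⁻¹).det *
              Real.exp (-((β + (s₀ • Ω⁻¹ + (Matrix.diagonal l)⁻¹)⁻¹ *ᵥ s) ⬝ᵥ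
                ((s₀ • Ω⁻¹ + (Matrix.diagonal l)⁻¹) *ᵥ
                  (β + (s₀ • Ω⁻¹ + (Matrix.diagonal l)⁻¹)⁻¹ *ᵥ s))) / 2)) *
            gammaPDFReal ((n : ℝ) / 2 + 1) (s₀ / 2) γ := by
  set A : Matrix (Fin m) (Fin m) ℝ := s₀ • Ω⁻¹ + (Matrix.diagonal l)⁻¹ with hA
  have hdiag : (Matrix.diagonal l)⁻¹ = Matrix.diagonal (fun j => (l j)⁻¹) := by
    apply Matrix.inv_eq_right_inv
    rw [Matrix.diagonal_mul_diagonal]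
    have h1 : (fun i => l i * (l i)⁻¹) = fun _ => (1:ℝ) :=
      funext fun j => mul_inv_cancel₀ (hl j).ne'
    rw [h1, Matrix.diagonal_one]
  have hApd : A.PosDef := by
    apply Matrix.PosDef.add (smul_posDef' hΩ.inv hs₀)
    rw [hdiag]
    exact Matrix.PosDef.diagonal fun j => inv_pos.mpr (hl j)
  have hAmul : A * A⁻¹ = 1 :=
    Matrix.mul_nonsing_inv A (Matrix.isUnit_iff_isUnit_det A |>.1 hApd.isUnit)
  have hAsymm : Aᵀ = A := hApd.1
  set u : Fin m → ℝ := A⁻¹ *ᵥ s with hu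
  have hAu : A *ᵥ u = s := by
    rw [hu, Matrix.mulVec_mulVec, hAmul, Matrix.one_mulVec]
  set c : ℝ := s ⬝ᵥ u with hc
  -- quadratic expansion
  have hquad : ∀ β : Fin m → ℝ, (β + u) ⬝ᵥ (A *ᵥ (β + u)) =
      s₀ * (β ⬝ᵥ (Ω⁻¹ *ᵥ β)) + β ⬝ᵥ ((Matrix.diagonal l)⁻¹ *ᵥ β) + 2 * (s ⬝ᵥ β) + c := by
    intro β
    have hsplit : β ⬝ᵥ (A *ᵥ β) =
        s₀ * (β ⬝ᵥ (Ω⁻¹ *ᵥ β)) + β ⬝ᵥ ((Matrix.diagonal l)⁻¹ *ᵥ β) := by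
      rw [hA, Matrix.add_mulVec, dotProduct_add, smul_mulVec, dotProduct_smul,
        smul_eq_mul]
    have h1 : u ⬝ᵥ (A *ᵥ β) = s ⬝ᵥ β := by
      rw [Matrix.dotProduct_mulVec, ← Matrix.mulVec_transpose, hAsymm, hAu]
    rw [Matrix.mulVec_add, hAu, add_dotProduct, dotProduct_add,
      dotProduct_add, hsplit, h1, dotProduct_comm β s, dotProduct_comm u s]
    ring
  have hπ : (0:ℝ) < 2 * π := by positivity
  have hDpos : (0:ℝ) < (2 * π) ^ (-(m : ℝ) / 2) := Real.rpow_pos_of_pos hπ _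
  have hsq : 0 < Real.sqrt A.det := Real.sqrt_pos.mpr hApd.det_pos
  have hGam : 0 < Real.Gamma ((n : ℝ) / 2 + 1) := Real.Gamma_pos_of_pos (by positivity)
  have hrp : (0:ℝ) < (s₀ / 2) ^ ((n : ℝ) / 2 + 1) := Real.rpow_pos_of_pos (by positivity) _
  refine ⟨Real.exp (c / 2) * ((2 * π) ^ (-(m : ℝ) / 2) * Real.sqrt A.det)⁻¹ *
      (Real.Gamma ((n : ℝ) / 2 + 1) / (s₀ / 2) ^ ((n : ℝ) / 2 + 1)), by positivity, ?_⟩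
  intro β γ hγ
  rw [Set.mem_Ioi] at hγ
  rw [hquad β]
  rw [gammaPDFReal, if_pos hγ.le, add_sub_cancel_right]
  set S := s ⬝ᵥ β
  set P := s₀ * (β ⬝ᵥ (Ω⁻¹ *ᵥ β))
  set R := β ⬝ᵥ ((Matrix.diagonal l)⁻¹ *ᵥ β)
  have h1 : Real.exp (-(P + R + 2 * S + c) / 2) =
      Real.exp (-(2 * S + P) / 2) * Real.exp (-R / 2) * (Real.exp (c / 2))⁻¹ := by
    rw [← Real.exp_neg, ← Real.exp_add, ← Real.exp_add]
    ring_nf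
  rw [h1]
  have he : Real.exp (-(s₀ / 2) * γ) = Real.exp (-(s₀ / 2 * γ)) := by ring_nf
  rw [he]
  field_simp
end
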